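/- The set Z of infinite paths is dense in X = Y_∞ ∪ Z (with the subspace topology from Y ∪ Z). -/

import Mathlib

namespace GraphCstar

/-- A directed graph: vertices, edges, source and range maps. -/
structure Graph where
  V : Type
  Ed : Type
  src : Ed → V
  rng : Ed → V

variable (G : Graph)

/-- Validity of a list of edges as a path starting at vertex `v`. -/
def Valid : G.V → List G.Ed → Prop
  | _, [] => True
  | v, e :: l => G.src e = v ∧ Valid (G.rng e) l

/-- Terminal vertex of a list of edges starting at `v`. -/
def rngTo : G.V → List G.Ed → G.V
  | v, [] => v
  | _, e :: l => rngTo (G.rng e) l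

theorem valid_append (l₁ l₂ : List G.Ed) (v : G.V) :
    Valid G v (l₁ ++ l₂) ↔ Valid G v l₁ ∧ Valid G (rngTo G v l₁) l₂ := by
  induction l₁ generalizing v with
  | nil => simp [Valid, rngTo]
  | cons e l ih => simp [Valid, rngTo, ih, and_assoc]

theorem rngTo_append (l₁ l₂ : List G.Ed) (v : G.V) :
    rngTo G v (l₁ ++ l₂) = rngTo G (rngTo G v l₁) l₂ := by
  induction l₁ generalizing v with
  | nil => rfl
  | cons e l ih => simp [rngTo, ih]

theorem valid_drop {v : G.V} {l : List G.Ed} (n : ℕ) (h : Valid G v l) :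
    Valid G (rngTo G v (l.take n)) (l.drop n) := by
  have h' : Valid G v (l.take n ++ l.drop n) := by
    rw [List.take_append_drop]; exact h
  exact ((valid_append G _ _ _).mp h').2

/-- A finite path in the graph `G`; vertices are the paths of length `0`. -/
structure FinPath where
  start : G.V
  edges : List G.Ed
  valid : Valid G start edges

namespace FinPath

variable {G}

/-- The terminal vertex (range) of a finite path. -/
def rngF (α : FinPath G) : G.V := rngTo G α.start α.edges

/-- The length of a finite path. -/
def len (α : FinPath G) : ℕ := α.edges.length

/-- The finite path of length `0` at the vertex `v`. -/
def vp (v : G.V) : FinPath G := ⟨v, [], trivial⟩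

/-- The finite path consisting of the single edge `e`. -/
def ep (e : G.Ed) : FinPath G := ⟨G.src e, [e], ⟨rfl, trivial⟩⟩

/-- Concatenation of finite paths. -/
def concat (α β : FinPath G) (h : β.start = α.rngF) : FinPath G :=
  ⟨α.start, α.edges ++ β.edges,
    (valid_append G _ _ _).mpr
      ⟨α.valid, by
        show Valid G α.rngF β.edges
        rw [← h]; exact β.valid⟩⟩

theorem rngF_concat (α β : FinPath G) (h : β.start = α.rngF) :
    (α.concat β h).rngF = β.rngF := by
  show rngTo G α.start (α.edges ++ β.edges) = _
  rw [rngTo_append]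
  show rngTo G α.rngF β.edges = _
  rw [← h]; rfl

end FinPath

/-- `α` is an initial segment of `β`. -/
def IsPref (α β : FinPath G) : Prop := α.start = β.start ∧ α.edges <+: β.edges

/-- The "remainder" path: if `α` is an initial segment of `β`, the path `μ` with
`β = αμ` (for other inputs the value is junk). -/
def diff (α β : FinPath G) : FinPath G :=
  ⟨rngTo G β.start (β.edges.take α.edges.length),
    β.edges.drop α.edges.length, valid_drop G _ β.valid⟩

open Classical in
/-- Totalized concatenation of finite paths (junk value when endpoints do not match). -/
noncomputable def catP (α β : FinPath G) : FinPath G :=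
  if h : β.start = α.rngF then α.concat β h else α

open Classical in
/-- The product on `T = {(α,β) ∈ Y × Y : r(α) = r(β)} ∪ {z}`, with `z` encoded as `none`. -/
noncomputable def mulT :
    Option (FinPath G × FinPath G) → Option (FinPath G × FinPath G) →
      Option (FinPath G × FinPath G)
  | none, _ => none
  | _, none => none
  | some (α₁, β₁), some (α₂, β₂) =>
    if IsPref G β₁ α₂ then some (catP G α₁ (diff G β₁ α₂), β₂)
    else if IsPref G α₂ β₁ then some (α₁, catP G β₂ (diff G α₂ β₁))
    else none

/-- The involution on `T`. -/
def starT :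
    Option (FinPath G × FinPath G) → Option (FinPath G × FinPath G)
  | none => none
  | some (α, β) => some (β, α)

/-- The subset of `Option (FinPath G × FinPath G)` corresponding to
`T = {(α,β) : r(α) = r(β)} ∪ {z}`. -/
def TsetT : Set (Option (FinPath G × FinPath G)) :=
  {t | ∀ α β : FinPath G, t = some (α, β) → α.rngF = β.rngF}

/-- An infinite path in the graph `G`. -/
structure InfPath where
  seq : ℕ → G.Ed
  valid : ∀ i, G.src (seq (i + 1)) = G.rng (seq i)

/-- The initial vertex of an infinite path. -/
def InfPath.start {G : Graph} (z : InfPath G) : G.V := G.src (z.seq 0)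

/-- Prepending an edge to an infinite path. -/
def consInf (e : G.Ed) (z : InfPath G) (h : z.start = G.rng e) : InfPath G where
  seq := fun n =>
    match n with
    | 0 => e
    | m + 1 => z.seq m
  valid := fun i =>
    match i with
    | 0 => h
    | m + 1 => z.valid m

/-- Prepending a finite edge list to an infinite path (with the starting vertex recorded). -/
def appendInfAux :
    (l : List G.Ed) → (v : G.V) → Valid G v l → (z : InfPath G) →
      z.start = rngTo G v l → {w : InfPath G // w.start = v}
  | [], _, _, z, h => ⟨z, h⟩
  | e :: l, v, hv, z, h =>
    let w := appendInfAux l (G.rng e) hv.2 z h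
    ⟨consInf G e w.1 w.2, hv.1⟩

/-- Concatenation of a finite path with an infinite path. -/
def FinPath.concatInf {G : Graph} (α : FinPath G) (z : InfPath G)
    (h : z.start = α.rngF) : InfPath G :=
  (appendInfAux G α.edges α.start α.valid z h).1

/-- The path space `Y ∪ Z` of all finite and infinite paths. -/
def PathSp := FinPath G ⊕ InfPath G

/-- The initial vertex of a (finite or infinite) path. -/
def startOf : PathSp G → G.V
  | .inl α => α.start
  | .inr z => z.start

/-- The length of a path, in `ℕ∞`. -/
def lenOf : PathSp G → ℕ∞
  | .inl α => (α.edges.length : ℕ∞)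
  | .inr _ => ⊤

/-- The `i`-th edge (0-indexed) of a path, if it exists. -/
def nthEdge : PathSp G → ℕ → Option G.Ed
  | .inl α, i => α.edges[i]?
  | .inr z, i => some (z.seq i)

/-- `x = αγ` for some (finite or infinite, possibly length `0`) path `γ`;
that is, `α` is an initial segment of `x`, i.e. `x ∈ D_α`. -/
def Ext (α : FinPath G) (x : PathSp G) : Prop :=
  (∃ (β : FinPath G) (h : β.start = α.rngF), x = .inl (α.concat β h)) ∨
  (∃ (w : InfPath G) (h : w.start = α.rngF), x = .inr (α.concatInf w h))

/-- The basic set `D_α ⊆ Y ∪ Z`. -/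
def Dset (α : FinPath G) : Set (PathSp G) := {x | Ext G α x}

/-- The topology on the path space, generated by the sets `D_α` and their complements. -/
def pathTop : TopologicalSpace (PathSp G) :=
  .generateFrom (Set.range (Dset G) ∪ Set.range fun α => (Dset G α)ᶜ)

/-- The vertex `v` emits infinitely many edges. -/
def Vinf (v : G.V) : Prop := {e | G.src e = v}.Infinite

/-- Membership in `X = Y_∞ ∪ Z`. -/
def memX : PathSp G → Prop
  | .inl α => Vinf G α.rngF
  | .inr _ => True

/-- The set `X = Y_∞ ∪ Z`. -/
def Xset : Set (PathSp G) := {x | memX G x}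

/-- Tail equivalence of paths: `x = αγ` and `y = βγ` for finite paths `α, β`
and a common (finite or infinite) path `γ`. -/
def TailEq (x y : PathSp G) : Prop :=
  (∃ (α β γ : FinPath G) (h₁ : γ.start = α.rngF) (h₂ : γ.start = β.rngF),
      x = .inl (α.concat γ h₁) ∧ y = .inl (β.concat γ h₂)) ∨
  (∃ (α β : FinPath G) (w : InfPath G) (h₁ : w.start = α.rngF)
      (h₂ : w.start = β.rngF),
      x = .inr (α.concatInf w h₁) ∧ y = .inr (β.concatInf w h₂))

/-- A subset of the path space is invariant (a union of tail-equivalence classes). -/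
def InvariantS (F : Set (PathSp G)) : Prop :=
  ∀ x ∈ F, ∀ y, TailEq G x y → y ∈ F

/-- Membership `(x, k, y) ∈ G` for the path groupoid: `x = αγ`, `y = βγ` and
`k = l(α) - l(β)`. -/
def InG (x : PathSp G) (k : ℤ) (y : PathSp G) : Prop :=
  (∃ (α β γ : FinPath G) (h₁ : γ.start = α.rngF) (h₂ : γ.start = β.rngF),
      x = .inl (α.concat γ h₁) ∧ y = .inl (β.concat γ h₂) ∧
        k = (α.len : ℤ) - (β.len : ℤ)) ∨
  (∃ (α β : FinPath G) (w : InfPath G) (h₁ : w.start = α.rngF)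
      (h₂ : w.start = β.rngF),
      x = .inr (α.concatInf w h₁) ∧ y = .inr (β.concatInf w h₂) ∧
        k = (α.len : ℤ) - (β.len : ℤ))

/-- There is a finite path from `u` to `w`. -/
def Reach (u w : G.V) : Prop := ∃ β : FinPath G, β.start = u ∧ β.rngF = w

/-- A loop based at the vertex `v`. -/
def LoopAt (v : G.V) (α : FinPath G) : Prop :=
  α.edges ≠ [] ∧ α.start = v ∧ α.rngF = v ∧
    ∀ i e, i + 1 < α.edges.length → α.edges[i]? = some e → G.rng e ≠ v

/-- Condition (K): no vertex has exactly one loop based at it. -/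
def CondK : Prop := ¬ ∃ v : G.V, ∃! α : FinPath G, LoopAt G v α

/-- A point of the path space has trivial isotropy if whenever `x = αγ = βγ`
then `l(α) = l(β)`. -/
def TrivIso (x : PathSp G) : Prop :=
  ∀ α β : FinPath G,
    ((∃ (γ : FinPath G) (h₁ : γ.start = α.rngF) (h₂ : γ.start = β.rngF),
        x = .inl (α.concat γ h₁) ∧ x = .inl (β.concat γ h₂)) ∨
     (∃ (w : InfPath G) (h₁ : w.start = α.rngF) (h₂ : w.start = β.rngF),
        x = .inr (α.concatInf w h₁) ∧ x = .inr (β.concatInf w h₂))) →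
    α.len = β.len

/-!
Let `δ` be a finite path whose range emits infinitely many edges. A basic neighbourhood of `δ`
is cut out by finitely many conditions `x ∈ D_α` (each `α` a prefix of `δ`) and `x ∉ D_β`
(each `β` not a prefix of `δ`). Only finitely many edges occur as the `|δ|`-th edge of these
`β`, so some edge `e` out of `r(δ)` avoids them all, and any infinite path `δ e w` meets
every condition: its prefixes of length `≤ |δ|` are those of `δ`, and its longer prefixes
continue with `e`.
-/

open TopologicalSpace Set in
theorem mem_closure_generateFrom_sets_and_compls {X ι : Type*} (f : ι → Set X) {S : Set X}
    {x : X} (h : ∀ A B : Set ι, A.Finite → B.Finite → (∀ a ∈ A, x ∈ f a) → (∀ b ∈ B, x ∉ f b) →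
      ∃ y ∈ S, (∀ a ∈ A, y ∈ f a) ∧ ∀ b ∈ B, y ∉ f b) :
    x ∈ @closure X (generateFrom (range f ∪ range fun i => (f i)ᶜ)) S := by
  let _ := generateFrom (range f ∪ range fun i => (f i)ᶜ)
  rw [(isTopologicalBasis_of_subbasis rfl).mem_closure_iff]
  rintro _ ⟨F, ⟨hF, hFsub⟩, rfl⟩ hxF
  obtain ⟨A, -, hA, hAF⟩ := exists_subset_image_finite_and (f := f) (s := univ)
    (p := fun t => t = F ∩ range f) |>.mp
      ⟨F ∩ range f, by rw [image_univ]; exact inter_subset_right, hF.inter_of_left _, rfl⟩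
  obtain ⟨B, -, hB, hBF⟩ := exists_subset_image_finite_and (f := fun i => (f i)ᶜ) (s := univ)
    (p := fun t => t = F ∩ range fun i => (f i)ᶜ) |>.mp
      ⟨_, by rw [image_univ]; exact inter_subset_right, hF.inter_of_left _, rfl⟩
  have hAF' : ∀ a ∈ A, f a ∈ F := fun a ha => (hAF.le (mem_image_of_mem f ha)).1
  have hBF' : ∀ b ∈ B, (f b)ᶜ ∈ F := fun b hb => (hBF.le (mem_image_of_mem _ hb)).1
  obtain ⟨y, hyS, hyA, hyB⟩ :=
    h A B hA hB (fun a ha => hxF _ (hAF' a ha)) (fun b hb => hxF _ (hBF' b hb))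
  refine ⟨y, fun s hs => ?_, hyS⟩
  rcases hFsub hs with ⟨i, rfl⟩ | ⟨i, rfl⟩
  · obtain ⟨a, ha, hai⟩ := hAF.ge ⟨hs, i, rfl⟩
    exact hai ▸ hyA a ha
  · obtain ⟨b, hb, hbi⟩ := hBF.ge ⟨hs, i, rfl⟩
    exact hbi ▸ hyB b hb

section Density

variable {G}

theorem InfPath.ext {z w : InfPath G} (h : ∀ n, z.seq n = w.seq n) : z = w := by
  cases z; cases w
  congr
  exact funext h

theorem FinPath.ext {α β : FinPath G} (hs : α.start = β.start) (he : α.edges = β.edges) :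
    α = β := by
  cases α; cases β
  cases hs; cases he
  rfl

def InfPath.drop (n : ℕ) (z : InfPath G) : InfPath G :=
  ⟨fun i => z.seq (n + i), fun i => z.valid (n + i)⟩

theorem appendInfAux_seq (l : List G.Ed) (v : G.V) (hv : Valid G v l) (z : InfPath G)
    (h : z.start = rngTo G v l) (n : ℕ) :
    (appendInfAux G l v hv z h).1.seq n =
      if hn : n < l.length then l[n] else z.seq (n - l.length) := by
  induction l generalizing v n with
  | nil => simp [appendInfAux]
  | cons e l ih =>
    cases n with
    | zero => simp [appendInfAux, consInf]
    | succ m =>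
      simp only [appendInfAux, consInf, List.length_cons, Nat.add_lt_add_iff_right,
        List.getElem_cons_succ, Nat.add_sub_add_right]
      exact ih _ _ _ m

theorem FinPath.concatInf_seq (α : FinPath G) (w : InfPath G) (h : w.start = α.rngF) (n : ℕ) :
    (α.concatInf w h).seq n =
      if hn : n < α.edges.length then α.edges[n] else w.seq (n - α.edges.length) :=
  appendInfAux_seq α.edges α.start α.valid w h n

theorem FinPath.concatInf_start (α : FinPath G) (w : InfPath G) (h : w.start = α.rngF) :
    (α.concatInf w h).start = α.start :=
  (appendInfAux G α.edges α.start α.valid w h).2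

theorem InfPath.src_seq_eq_rngTo (z : InfPath G) (l : List G.Ed) (k : ℕ)
    (hl : ∀ i (hi : i < l.length), z.seq (k + i) = l[i]) :
    G.src (z.seq (k + l.length)) = rngTo G (G.src (z.seq k)) l := by
  induction l generalizing k with
  | nil => rfl
  | cons e l ih =>
    have he : z.seq k = e := hl 0 (by simp)
    have hl' : ∀ i (hi : i < l.length), z.seq (k + 1 + i) = l[i] := fun i hi => by
      have := hl (i + 1) (by simpa using hi)
      rwa [List.getElem_cons_succ, ← Nat.add_assoc, Nat.add_right_comm] at this
    rw [List.length_cons, ← Nat.add_assoc, Nat.add_right_comm, ih (k + 1) hl', z.valid, he]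
    rfl

theorem ext_inr_iff (α : FinPath G) (z : InfPath G) :
    Ext G α (.inr z) ↔
      z.start = α.start ∧ ∀ i (hi : i < α.edges.length), z.seq i = α.edges[i] := by
  constructor
  · rintro (⟨β, h, hz⟩ | ⟨w, h, hz⟩)
    · cases hz
    · cases hz
      refine ⟨α.concatInf_start w h, fun i hi => ?_⟩
      rw [FinPath.concatInf_seq, dif_pos hi]
  · rintro ⟨h0, hseq⟩
    have hsrc : (z.drop α.edges.length).start = α.rngF := by
      have := z.src_seq_eq_rngTo α.edges 0 (by simpa using hseq)
      rw [Nat.zero_add] at this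
      show G.src (z.seq α.edges.length) = rngTo G α.start α.edges
      rw [← h0]
      exact this
    refine Or.inr ⟨z.drop α.edges.length, hsrc, congrArg Sum.inr (InfPath.ext fun n => ?_)⟩
    rw [FinPath.concatInf_seq]
    split_ifs with hn
    · exact hseq n hn
    · exact congrArg z.seq (Nat.add_sub_cancel' (Nat.le_of_not_lt hn)).symm

theorem ext_inl_iff (α δ : FinPath G) :
    Ext G α (.inl δ) ↔ α.start = δ.start ∧ α.edges <+: δ.edges := by
  constructor
  · rintro (⟨β, h, hδ⟩ | ⟨w, h, hδ⟩)
    · cases hδ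
      exact ⟨rfl, β.edges, rfl⟩
    · cases hδ
  · rintro ⟨h0, t, ht⟩
    have hv : Valid G α.rngF t := by
      have hδv : Valid G α.start (α.edges ++ t) := by
        rw [h0, ht]; exact δ.valid
      exact ((valid_append G _ _ _).mp hδv).2
    exact Or.inl ⟨⟨α.rngF, t, hv⟩, rfl, congrArg Sum.inl (FinPath.ext h0.symm ht.symm)⟩

theorem ext_concatInf_of_ext {α δ : FinPath G} (hαδ : Ext G α (.inl δ)) (w : InfPath G)
    (h : w.start = δ.rngF) : Ext G α (.inr (δ.concatInf w h)) := by
  obtain ⟨hstart, hpre⟩ := (ext_inl_iff α δ).mp hαδ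
  refine (ext_inr_iff α _).mpr ⟨(δ.concatInf_start w h).trans hstart.symm, fun i hi => ?_⟩
  rw [FinPath.concatInf_seq, dif_pos (lt_of_lt_of_le hi hpre.length_le)]
  exact (hpre.getElem hi).symm

theorem getElem?_eq_of_ext_concatInf_consInf {β δ : FinPath G} (hβδ : ¬ Ext G β (.inl δ))
    {e : G.Ed} (w : InfPath G) (hw : w.start = G.rng e)
    (he : (consInf G e w hw).start = δ.rngF)
    (hβ : Ext G β (.inr (δ.concatInf (consInf G e w hw) he))) :
    β.edges[δ.edges.length]? = some e := by
  obtain ⟨hstart, hseq⟩ := (ext_inr_iff β _).mp hβ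
  rw [FinPath.concatInf_start] at hstart
  by_cases hlen : δ.edges.length < β.edges.length
  · rw [List.getElem?_eq_getElem hlen, ← hseq _ hlen, FinPath.concatInf_seq,
      dif_neg (lt_irrefl _), Nat.sub_self]
    rfl
  · refine absurd ((ext_inl_iff β δ).mpr ⟨hstart.symm, List.prefix_iff_getElem.mpr
      ⟨not_lt.mp hlen, fun i hi => ?_⟩⟩) hβδ
    rw [← hseq i hi, FinPath.concatInf_seq, dif_pos]

theorem exists_infPath_start_eq (hns : ∀ v : G.V, ∃ e : G.Ed, G.src e = v) (v : G.V) :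
    ∃ w : InfPath G, w.start = v := by
  choose next hnext using hns
  let vert : ℕ → G.V := fun n => (fun u => G.rng (next u))^[n] v
  exact ⟨⟨fun n => next (vert n), fun i => by
    simp only [vert, Function.iterate_succ_apply', hnext]⟩, hnext v⟩

end Density

theorem infinite_paths_dense_general (G : Graph)
    (hns : ∀ v : G.V, ∃ e : G.Ed, G.src e = v) :
    Xset G ⊆ @closure (PathSp G) (pathTop G)
      (Set.range (Sum.inr : InfPath G → PathSp G)) := by
  rintro (δ | z) hδ
  · refine mem_closure_generateFrom_sets_and_compls (Dset G) fun A B _ hB hδA hδB => ?_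
    have hE : (Option.some ⁻¹' ((fun β : FinPath G => β.edges[δ.edges.length]?) '' B)).Finite :=
      (hB.image _).preimage (Option.some_injective _).injOn
    obtain ⟨e, he, heB⟩ := ((show Vinf G δ.rngF from hδ).sdiff hE).nonempty
    obtain ⟨w, hw⟩ := exists_infPath_start_eq hns (G.rng e)
    refine ⟨.inr (δ.concatInf (consInf G e w hw) he), ⟨_, rfl⟩,
      fun α hα => ext_concatInf_of_ext (hδA α hα) _ _, fun β hβ hzβ => heB ⟨β, hβ, ?_⟩⟩
    exact getElem?_eq_of_ext_concatInf_consInf (hδB β hβ) w hw he hzβ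
  · exact @subset_closure _ (pathTop G) _ _ (Set.mem_range_self z)

/-- The set `Z` of infinite paths is dense in `X = Y_∞ ∪ Z`
(with the subspace topology from `Y ∪ Z`). -/
theorem infinite_paths_dense (G : Graph) [Countable G.V] [Countable G.Ed]
    (hns : ∀ v : G.V, ∃ e : G.Ed, G.src e = v) :
    Xset G ⊆ @closure (PathSp G) (pathTop G)
      (Set.range (Sum.inr : InfPath G → PathSp G)) :=
  infinite_paths_dense_general G hns

end GraphCstar
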